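/- For every integer N ≥ 0 one has the summed relation (√t/2)·Σ_{j=0}^{N−1} ( r̄_{j+1} r_j − r_{j+1} r̄_j ) + μ·N = 0. -/

import Mathlib

open scoped BigOperators

/-- The modified Bessel function of the first kind,
`I_α(x) = Σ_{m=0}^∞ (x/2)^(2m+α) / (m! · Γ(α+m+1))`,
with `1/Γ` interpreted via the entire reciprocal Gamma function
(Mathlib's `Real.Gamma` vanishes at the poles). -/
noncomputable def besselI (α x : ℝ) : ℝ :=
  ∑' m : ℕ, (x / 2) ^ (2 * (m : ℝ) + α) / ((m.factorial : ℝ) * Real.Gamma (α + m + 1))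

/-- The Toeplitz determinant `D^ε_N(t) = det[ I_{μ+ε+j−k}(√t) ]_{1≤j,k≤N}`,
with `D^ε_0(t) = 1` (the empty determinant). -/
noncomputable def toeplitzDet (μ : ℝ) (ε : ℤ) (N : ℕ) (t : ℝ) : ℝ :=
  Matrix.det (Matrix.of fun j k : Fin N =>
    besselI (μ + ε + ((j : ℕ) : ℝ) - ((k : ℕ) : ℝ)) (Real.sqrt t))

/-- The reflection coefficient `r_N(t) = (−1)^N D^1_N(t)/D^0_N(t)`. -/
noncomputable def rcoef (μ : ℝ) (N : ℕ) (t : ℝ) : ℝ :=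
  (-1) ^ N * toeplitzDet μ 1 N t / toeplitzDet μ 0 N t

/-- The reflection coefficient `r̄_N(t) = (−1)^N D^{−1}_N(t)/D^0_N(t)`. -/
noncomputable def rbcoef (μ : ℝ) (N : ℕ) (t : ℝ) : ℝ :=
  (-1) ^ N * toeplitzDet μ (-1) N t / toeplitzDet μ 0 N t

/-!
Put `a m = I_{μ+m}(√t)` and `T_n = [a (j - k)]`, and let `v_n` solve `T_n v = (a (j + 1))_j`.
By Cramer's rule the last entry of `v_n` is `-r_n`, and comparing the first `n` rows of the
systems for `v_{n+1}` and `v_n` gives the Levinson recursion `(v_{n+1})₀ = (v_n)₀ - r_{n+1} r̄_n`.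
Hence `tr (T_N⁻¹ T_N⁺) = (v_N)₀` telescopes to `-∑ r_{j+1} r̄_j`, where `T⁺ = [a (j - k + 1)]`;
replacing `a` by `a ∘ Neg.neg` transposes every `T_n` and swaps `r` and `r̄`, so likewise
`tr (T_N⁻¹ T_N⁻) = -∑ r̄_{j+1} r_j`. Finally the Bessel recurrence
`(√t/2) (I_{α-1} - I_{α+1}) = α I_α` says `[D, T_N] = (√t/2) (T_N⁻ - T_N⁺) - μ T_N`
for `D = diag (0, …, N - 1)`, and `tr (T_N⁻¹ [D, T_N]) = 0`.
-/

open Matrix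

lemma Matrix.inv_mulVec_apply {K n : Type*} [Field K] [Fintype n] [DecidableEq n]
    (A : Matrix n n K) (b : n → K) (i : n) :
    (A⁻¹ *ᵥ b) i = A.det⁻¹ * (A.updateCol i b).det := by
  rw [inv_def, smul_mulVec, ← cramer_eq_adjugate_mulVec]
  simp [Ring.inverse_eq_inv, cramer_apply]

section Toeplitz

variable {α : Type*}

def toeplitz (a : ℤ → α) (n : ℕ) : Matrix (Fin n) (Fin n) α :=
  of fun j k => a ((j : ℕ) - (k : ℕ))

lemma toeplitz_comp_neg (a : ℤ → α) (n : ℕ) : toeplitz (a ∘ Neg.neg) n = (toeplitz a n)ᵀ := by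
  ext j k
  simp [toeplitz]

lemma submatrix_rev_toeplitz (a : ℤ → α) (n : ℕ) :
    (toeplitz a n).submatrix Fin.rev Fin.rev = (toeplitz a n)ᵀ := by
  ext j k
  simp only [toeplitz, submatrix_apply, transpose_apply, of_apply, Fin.val_rev]
  congr 1
  omega

lemma comp_neg_comp_add_one (a : ℤ → α) :
    (fun m => (a ∘ Neg.neg) (m + 1)) = (fun m => a (m - 1)) ∘ Neg.neg := by
  funext m
  simp only [Function.comp_apply]
  congr 1
  ring

end Toeplitz

variable {K : Type*} [Field K]

-- With `a m = I_{μ+m}(√t)`, `reflCoeff a n` is `r_n` and `reflCoeff (a ∘ Neg.neg) n` is `r̄_n`.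
noncomputable def reflCoeff (a : ℤ → K) (n : ℕ) : K :=
  (-1) ^ n * (toeplitz (fun m => a (m + 1)) n).det / (toeplitz a n).det

noncomputable def shiftSolution (a : ℤ → K) (n : ℕ) : Fin n → K :=
  (toeplitz a n)⁻¹ *ᵥ fun j => a ((j : ℕ) + 1)

noncomputable def shiftTrace (a : ℤ → K) (n : ℕ) : K :=
  trace ((toeplitz a n)⁻¹ * toeplitz (fun m => a (m + 1)) n)

section ToeplitzSystem

variable (a : ℤ → K) (n : ℕ)

lemma det_toeplitz_comp_neg : (toeplitz (a ∘ Neg.neg) n).det = (toeplitz a n).det := by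
  rw [toeplitz_comp_neg, det_transpose]

lemma reflCoeff_comp_neg :
    reflCoeff (a ∘ Neg.neg) n =
      (-1) ^ n * (toeplitz (fun m => a (m - 1)) n).det / (toeplitz a n).det := by
  rw [reflCoeff, comp_neg_comp_add_one, det_toeplitz_comp_neg, det_toeplitz_comp_neg]

lemma shiftTrace_comp_neg :
    shiftTrace (a ∘ Neg.neg) n =
      trace ((toeplitz a n)⁻¹ * toeplitz (fun m => a (m - 1)) n) := by
  rw [shiftTrace, comp_neg_comp_add_one, toeplitz_comp_neg, toeplitz_comp_neg,
    ← transpose_nonsing_inv, ← transpose_mul, trace_transpose, trace_mul_comm]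

lemma shiftSolution_last : shiftSolution a (n + 1) (Fin.last n) = -reflCoeff a (n + 1) := by
  have hcol : (toeplitz a (n + 1)).updateCol (Fin.last n)
        (fun j : Fin (n + 1) => a ((j : ℕ) + 1)) =
      (toeplitz (fun m => a (m + 1)) (n + 1)).submatrix id (finRotate (n + 1)) := by
    ext j k
    rcases eq_or_ne k (Fin.last n) with rfl | hk
    · simp [toeplitz]
    · have : ((finRotate (n + 1) k : Fin (n + 1)) : ℕ) = k + 1 := by
        rw [finRotate_apply, Fin.val_add_one, if_neg hk]
      simp only [toeplitz, updateCol_ne hk, submatrix_apply, id_eq, of_apply, this]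
      congr 1
      push_cast
      ring
  rw [shiftSolution, inv_mulVec_apply, hcol, det_permute', sign_finRotate, reflCoeff]
  push_cast
  ring

variable {a n}

lemma toeplitz_mulVec_shiftSolution (h : IsUnit (toeplitz a n).det) :
    toeplitz a n *ᵥ shiftSolution a n = fun j : Fin n => a ((j : ℕ) + 1) := by
  rw [shiftSolution, mulVec_mulVec, mul_nonsing_inv _ h, one_mulVec]

lemma toeplitz_mulVec_shiftSolution_comp_neg_rev (h : IsUnit (toeplitz a n).det) :
    toeplitz a n *ᵥ (shiftSolution (a ∘ Neg.neg) n ∘ Fin.rev) =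
      fun j : Fin n => a ((j : ℕ) - n) := by
  have hrev : ⇑(Fin.revPerm (n := n)) = Fin.rev := rfl
  have hT : toeplitz a n = (toeplitz (a ∘ Neg.neg) n).submatrix Fin.rev Fin.revPerm := by
    rw [hrev, submatrix_rev_toeplitz, toeplitz_comp_neg, transpose_transpose]
  have hb : IsUnit (toeplitz (a ∘ Neg.neg) n).det := by rwa [det_toeplitz_comp_neg]
  rw [hT, submatrix_mulVec_equiv, Fin.revPerm_symm, hrev, Function.comp_assoc,
    Fin.rev_involutive.comp_self, Function.comp_id, toeplitz_mulVec_shiftSolution hb]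
  funext j
  simp only [Function.comp_apply, Fin.val_rev]
  congr 1
  omega

lemma shiftSolution_succ_castSucc (hn : IsUnit (toeplitz a n).det)
    (hn1 : IsUnit (toeplitz a (n + 1)).det) (k : Fin n) :
    shiftSolution a (n + 1) k.castSucc = shiftSolution a n k -
      shiftSolution a (n + 1) (Fin.last n) * shiftSolution (a ∘ Neg.neg) n k.rev := by
  set v := shiftSolution a (n + 1)
  have hrows : toeplitz a n *ᵥ (fun k => v k.castSucc) = toeplitz a n *ᵥ
      (shiftSolution a n - v (Fin.last n) • (shiftSolution (a ∘ Neg.neg) n ∘ Fin.rev)) := by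
    rw [mulVec_sub, mulVec_smul, toeplitz_mulVec_shiftSolution hn,
      toeplitz_mulVec_shiftSolution_comp_neg_rev hn]
    funext j
    have hrow := congrFun (toeplitz_mulVec_shiftSolution hn1) j.castSucc
    simp only [mulVec, dotProduct, Fin.sum_univ_castSucc] at hrow
    simp only [mulVec, dotProduct, Pi.sub_apply, Pi.smul_apply, smul_eq_mul]
    simp only [toeplitz, of_apply, Fin.val_castSucc, Fin.val_last] at hrow ⊢
    linear_combination hrow
  have := mulVec_injective_iff_isUnit.mpr ((isUnit_iff_isUnit_det _).mpr hn) hrows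
  simpa using congrFun this k

lemma shiftTrace_succ_eq (h : IsUnit (toeplitz a (n + 1)).det) :
    shiftTrace a (n + 1) = shiftSolution a (n + 1) 0 := by
  have hinv := nonsing_inv_mul _ h
  rw [shiftTrace, trace, Fin.sum_univ_succ]
  -- column `i + 1` of `T⁺` is column `i` of `T`, so only the `(0, 0)` diagonal entry survives
  have hoff : ∀ i : Fin n,
      ((toeplitz a (n + 1))⁻¹ * toeplitz (fun m => a (m + 1)) (n + 1)) i.succ i.succ = 0 := by
    intro i
    have hcol : ∀ j, toeplitz (fun m => a (m + 1)) (n + 1) j i.succ =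
        toeplitz a (n + 1) j i.castSucc := by
      intro j
      simp only [toeplitz, of_apply, Fin.val_succ, Fin.val_castSucc]
      congr 1
      push_cast
      ring
    rw [mul_apply]
    simp only [hcol]
    rw [← mul_apply, hinv, one_apply_ne (Fin.castSucc_lt_succ (i := i)).ne']
  simp only [diag_apply, hoff, Finset.sum_const_zero, add_zero]
  simp [shiftSolution, mul_apply, mulVec, dotProduct, toeplitz]

lemma shiftTrace_succ (hn : IsUnit (toeplitz a n).det) (hn1 : IsUnit (toeplitz a (n + 1)).det) :
    shiftTrace a (n + 1) = shiftTrace a n - reflCoeff a (n + 1) * reflCoeff (a ∘ Neg.neg) n := by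
  rw [shiftTrace_succ_eq hn1]
  cases n with
  | zero =>
    rw [← Fin.last_zero, shiftSolution_last]
    simp [shiftTrace, reflCoeff]
  | succ m =>
    rw [← Fin.castSucc_zero, shiftSolution_succ_castSucc hn hn1, ← shiftTrace_succ_eq hn,
      Fin.rev_zero, shiftSolution_last, shiftSolution_last]
    ring

variable (a) in
lemma shiftTrace_eq_neg_sum (h : ∀ n, IsUnit (toeplitz a n).det) (N : ℕ) :
    shiftTrace a N =
      -∑ j ∈ Finset.range N, reflCoeff a (j + 1) * reflCoeff (a ∘ Neg.neg) j := by
  induction N with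
  | zero => simp [shiftTrace]
  | succ N ih => rw [shiftTrace_succ (h N) (h (N + 1)), ih, Finset.sum_range_succ]; ring

end ToeplitzSystem

section ThreeTermRecurrence

variable {a : ℤ → K} {c μ : K} (hrec : ∀ m : ℤ, c * (a (m - 1) - a (m + 1)) = (μ + m) * a m)
include hrec

lemma commutator_diagonal_toeplitz (n : ℕ) :
    diagonal (fun j : Fin n => ((j : ℕ) : K)) * toeplitz a n -
        toeplitz a n * diagonal (fun j : Fin n => ((j : ℕ) : K)) =
      c • (toeplitz (fun m => a (m - 1)) n - toeplitz (fun m => a (m + 1)) n) -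
        μ • toeplitz a n := by
  ext j k
  simp only [Matrix.sub_apply, diagonal_mul, mul_diagonal, Matrix.smul_apply, smul_eq_mul,
    toeplitz, of_apply]
  have := hrec ((j : ℕ) - (k : ℕ))
  push_cast at this
  linear_combination -this

lemma shiftTrace_comp_neg_sub_shiftTrace {n : ℕ} (h : IsUnit (toeplitz a n).det) :
    c * (shiftTrace (a ∘ Neg.neg) n - shiftTrace a n) = μ * n := by
  set T := toeplitz a n
  set D := diagonal (fun j : Fin n => ((j : ℕ) : K))
  have htrace : trace (T⁻¹ * (D * T - T * D)) = 0 := by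
    rw [mul_sub, trace_sub, ← Matrix.mul_assoc, trace_mul_comm, ← Matrix.mul_assoc,
      mul_nonsing_inv _ h, ← Matrix.mul_assoc, nonsing_inv_mul _ h, sub_self]
  rw [commutator_diagonal_toeplitz hrec, mul_sub, Matrix.mul_smul, Matrix.mul_smul,
    nonsing_inv_mul _ h, trace_sub, trace_smul, trace_smul, trace_one, Fintype.card_fin, mul_sub,
    trace_sub] at htrace
  rw [shiftTrace_comp_neg, shiftTrace]
  simp only [smul_eq_mul] at htrace
  linear_combination htrace

theorem sum_reflCoeff_mul_reflCoeff (h : ∀ n, (toeplitz a n).det ≠ 0) (N : ℕ) :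
    c * ∑ j ∈ Finset.range N, (reflCoeff (a ∘ Neg.neg) (j + 1) * reflCoeff a j -
        reflCoeff a (j + 1) * reflCoeff (a ∘ Neg.neg) j) + μ * N = 0 := by
  have ha : ∀ n, IsUnit (toeplitz a n).det := fun n => (h n).isUnit
  have hb : ∀ n, IsUnit (toeplitz (a ∘ Neg.neg) n).det := fun n => by
    rw [det_toeplitz_comp_neg]; exact ha n
  have key := shiftTrace_comp_neg_sub_shiftTrace hrec (ha N)
  rw [shiftTrace_eq_neg_sum a ha, shiftTrace_eq_neg_sum _ hb] at key
  have hnegneg : (a ∘ Neg.neg) ∘ Neg.neg = a := by funext m; simp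
  rw [hnegneg] at key
  rw [Finset.sum_sub_distrib]
  linear_combination -key

end ThreeTermRecurrence

lemma Real.one_div_Gamma_eq_self_div_Gamma_add_one (s : ℝ) :
    1 / Real.Gamma s = s / Real.Gamma (s + 1) := by
  rcases eq_or_ne s 0 with rfl | hs
  · simp
  rw [Real.Gamma_add_one hs]
  rcases eq_or_ne (Real.Gamma s) 0 with hg | hg
  · simp [hg]
  · field_simp

noncomputable def besselTerm (α q : ℝ) (m : ℕ) : ℝ :=
  q ^ (2 * (m : ℝ) + α) / ((m.factorial : ℝ) * Real.Gamma (α + m + 1))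

section BesselTerm

variable {α q : ℝ} (hq : 0 < q)
include hq

lemma besselTerm_succ {m : ℕ} (hm : α + m + 1 ≠ 0) :
    besselTerm α q (m + 1) = besselTerm α q m * (q ^ 2 / ((m + 1) * (α + m + 1))) := by
  have hpow : q ^ (2 * ((m + 1 : ℕ) : ℝ) + α) = q ^ (2 * (m : ℝ) + α) * q ^ 2 := by
    rw [← Real.rpow_natCast q 2, ← Real.rpow_add hq]
    push_cast
    ring_nf
  have hGamma :
      Real.Gamma (α + ((m + 1 : ℕ) : ℝ) + 1) = (α + m + 1) * Real.Gamma (α + m + 1) := by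
    rw [← Real.Gamma_add_one hm]
    push_cast
    ring_nf
  rw [besselTerm, besselTerm, hpow, hGamma, Nat.factorial_succ]
  push_cast
  rcases eq_or_ne (Real.Gamma (α + m + 1)) 0 with hG | hG
  · simp [hG]
  · field_simp

lemma summable_besselTerm (α : ℝ) : Summable (besselTerm α q) := by
  refine summable_of_ratio_norm_eventually_le (r := 1 / 2) (by norm_num) ?_
  filter_upwards [Filter.eventually_ge_atTop ⌈|α| + 2 * q ^ 2⌉₊] with m hm
  have hm' : |α| + 2 * q ^ 2 ≤ m := Nat.ceil_le.mp hm
  have hαm : 2 * q ^ 2 + 1 ≤ α + m + 1 := by linarith [neg_abs_le α]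
  have hpos : 0 < ((m : ℝ) + 1) * (α + m + 1) := by
    have : 0 < α + m + 1 := by linarith [sq_nonneg q]
    positivity
  have hratio : q ^ 2 / ((m + 1) * (α + m + 1)) ≤ 1 / 2 := by
    rw [div_le_div_iff₀ hpos (by norm_num)]
    nlinarith [sq_nonneg q]
  rw [besselTerm_succ hq (by linarith [sq_nonneg q]), norm_mul,
    Real.norm_of_nonneg (div_nonneg (sq_nonneg q) hpos.le)]
  calc ‖besselTerm α q m‖ * (q ^ 2 / ((m + 1) * (α + m + 1))) ≤ ‖besselTerm α q m‖ * (1 / 2) :=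
        mul_le_mul_of_nonneg_left hratio (norm_nonneg _)
    _ = 1 / 2 * ‖besselTerm α q m‖ := mul_comm _ _

lemma besselTerm_sub_one (m : ℕ) :
    besselTerm (α - 1) q m = (α + m) / q * besselTerm α q m := by
  have hG := Real.one_div_Gamma_eq_self_div_Gamma_add_one (α + m)
  rw [besselTerm, besselTerm, show α - 1 + m + 1 = α + m by ring,
    show 2 * (m : ℝ) + (α - 1) = 2 * m + α - 1 by ring, Real.rpow_sub_one hq.ne']
  calc _ = q ^ (2 * (m : ℝ) + α) / q / m.factorial * (1 / Real.Gamma (α + m)) := by ring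
    _ = _ := by rw [hG]; ring

lemma besselTerm_add_one (m : ℕ) :
    besselTerm (α + 1) q m = (m + 1) / q * besselTerm α q (m + 1) := by
  rw [besselTerm, besselTerm, Nat.factorial_succ]
  push_cast
  rw [show α + 1 + m + 1 = α + (m + 1) + 1 by ring,
    show 2 * ((m : ℝ) + 1) + α = (2 * m + (α + 1)) + 1 by ring, Real.rpow_add_one hq.ne']
  have : (m : ℝ) + 1 ≠ 0 := by positivity
  field_simp

end BesselTerm

theorem besselI_sub_one_sub_besselI_add_one (α : ℝ) {x : ℝ} (hx : 0 < x) :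
    x / 2 * (besselI (α - 1) x - besselI (α + 1) x) = α * besselI α x := by
  have hq : 0 < x / 2 := by positivity
  set q := x / 2
  have hT := summable_besselTerm hq α
  have hshift : (fun m : ℕ => ((m + 1 : ℕ) : ℝ) / q * besselTerm α q (m + 1)) =
      besselTerm (α + 1) q := by
    funext m
    rw [besselTerm_add_one hq, Nat.cast_succ]
  have hmT : Summable fun m : ℕ => (m : ℝ) / q * besselTerm α q m := by
    rw [← summable_nat_add_iff 1, hshift]
    exact summable_besselTerm hq (α + 1)
  have hminus : besselI (α - 1) x = ∑' m : ℕ, (α + m) / q * besselTerm α q m :=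
    tsum_congr (besselTerm_sub_one hq)
  have hplus : besselI (α + 1) x = ∑' m : ℕ, (m : ℝ) / q * besselTerm α q m := by
    rw [hmT.tsum_eq_zero_add, Nat.cast_zero, zero_div, zero_mul, zero_add]
    exact tsum_congr fun m => (congrFun hshift m).symm
  have hsplit : ∀ m : ℕ, (α + m) / q * besselTerm α q m =
      α / q * besselTerm α q m + m / q * besselTerm α q m := fun m => by ring
  rw [hminus, hplus, tsum_congr hsplit, (hT.mul_left _).tsum_add hmT, add_sub_cancel_right,
    tsum_mul_left]
  have hI : besselI α x = ∑' m, besselTerm α q m := rfl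
  rw [hI]
  field_simp

lemma toeplitzDet_eq_det_toeplitz (μ : ℝ) (ε : ℤ) (N : ℕ) (t : ℝ) :
    toeplitzDet μ ε N t =
      (toeplitz (fun m : ℤ => besselI (μ + ((m + ε : ℤ) : ℝ)) (Real.sqrt t)) N).det := by
  unfold toeplitzDet
  congr 1
  ext j k
  simp only [toeplitz, of_apply]
  congr 1
  push_cast
  ring

theorem stmt3_general (t μ : ℝ) (ht : 0 < t)
    (hD : ∀ N : ℕ, toeplitzDet μ 0 N t ≠ 0) :
    ∀ N : ℕ,
      Real.sqrt t / 2 *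
          (∑ j ∈ Finset.range N,
            (rbcoef μ (j + 1) t * rcoef μ j t - rcoef μ (j + 1) t * rbcoef μ j t))
        + μ * (N : ℝ) = 0 := by
  set a : ℤ → ℝ := fun m => besselI (μ + m) (Real.sqrt t)
  have hdet : ∀ ε N, toeplitzDet μ ε N t = (toeplitz (fun m => a (m + ε)) N).det :=
    fun ε N => toeplitzDet_eq_det_toeplitz μ ε N t
  have hr : ∀ N, rcoef μ N t = reflCoeff a N := fun N => by
    simp only [rcoef, reflCoeff, hdet, add_zero]
  have hrb : ∀ N, rbcoef μ N t = reflCoeff (a ∘ Neg.neg) N := fun N => by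
    simp only [rbcoef, reflCoeff_comp_neg, hdet, add_zero, sub_eq_add_neg]
  have hrec : ∀ m : ℤ, Real.sqrt t / 2 * (a (m - 1) - a (m + 1)) = (μ + m) * a m := fun m => by
    have := besselI_sub_one_sub_besselI_add_one (μ + m) (Real.sqrt_pos.mpr ht)
    simpa [a, add_sub_assoc, add_assoc] using this
  intro N
  simpa only [hr, hrb] using
    sum_reflCoeff_mul_reflCoeff hrec (fun n => by simpa [hdet] using hD n) N

theorem stmt3 (t μ : ℝ) (ht : 0 < t)
    (hD : ∀ N : ℕ, toeplitzDet μ 0 N t ≠ 0)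
    (hv : ∀ N : ℕ, 1 ≤ N → 1 - rcoef μ N t * rbcoef μ N t ≠ 0) :
    ∀ N : ℕ,
      Real.sqrt t / 2 *
          (∑ j ∈ Finset.range N,
            (rbcoef μ (j + 1) t * rcoef μ j t - rcoef μ (j + 1) t * rbcoef μ j t))
        + μ * (N : ℝ) = 0 :=
  stmt3_general t μ ht hD
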